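/- arXiv:0709.2730 — 2 statements merged into one kernel-verified Lean document; each statement's English description precedes it below -/
import Mathlib

section
/- Let (Ω,F,P) be a complete probability space and let Φ : [0,∞) → [0,∞) be a convex, lower semi-continuous function with liminf_{x→∞} Φ(x)/x > 0. Then the functional G : L0+ → [0,∞] defined by G(f) = E[Φ(f)] is convex, lower semi-continuous with respect to convergence in probability, has a nonempty, convex, closed and bounded-in-probability lower-contour set, and attains its infimum on L0+. -/
open MeasureTheory Filter

/-- The set `L0+`: (versions of) nonnegative real-valued random variables. -/
def L0plus {Ω : Type*} [MeasurableSpace Ω] (μ : Measure Ω) : Set (Ω → ℝ) :=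
  {f | Measurable f ∧ ∀ᵐ ω ∂μ, 0 ≤ f ω}

/-- A set of random variables is *bounded in probability* if
`sup_{f ∈ C} P[|f| ≥ M] → 0` as `M → ∞`. -/
def BoundedInProbability {Ω : Type*} [MeasurableSpace Ω] (μ : Measure Ω)
    (C : Set (Ω → ℝ)) : Prop :=
  Tendsto (fun M : ℝ => ⨆ f ∈ C, μ {ω | M ≤ |f ω|}) atTop (nhds 0)

/-- A set of random variables is *closed in probability* (closed for the metrizable
topology of convergence in measure) if it contains every limit in measure of a
sequence of its elements. -/
def ClosedInMeasure {Ω : Type*} [MeasurableSpace Ω] (μ : Measure Ω)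
    (C : Set (Ω → ℝ)) : Prop :=
  ∀ (f : ℕ → Ω → ℝ) (g : Ω → ℝ), (∀ n, f n ∈ C) →
    TendstoInMeasure μ f atTop g → g ∈ C

/-- A convex set `C` of random variables is *convexly compact* (for the topology of
convergence in probability) if every family of closed (in probability) and convex
subsets of `C`, indexed by a nonempty set, with the finite-intersection property has
nonempty total intersection. -/
def ConvexlyCompactInMeasure {Ω : Type*} [MeasurableSpace Ω] (μ : Measure Ω)
    (C : Set (Ω → ℝ)) : Prop :=
  Convex ℝ C ∧
    ∀ (A : Type) (_ : Nonempty A) (F : A → Set (Ω → ℝ)),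
      (∀ α, ClosedInMeasure μ (F α)) → (∀ α, Convex ℝ (F α)) → (∀ α, F α ⊆ C) →
      (∀ D : Finset A, D.Nonempty → (⋂ α ∈ D, F α).Nonempty) →
      (⋂ α, F α).Nonempty


/-!
The growth condition makes `Φ` coercive, so the lower semicontinuous `Φ` attains its minimum on
`[0, ∞)` at some `x₀`, and the constant `x₀` minimises `G`. Convexity of `G` is pointwise
convexity of `Φ` integrated; lower semicontinuity follows from Fatou's lemma along a subsequence
that realises the `liminf` and converges almost everywhere. On the sublevel set `{G ≤ G x₀}`,
Markov's inequality applied to `Φ(f) ≥ δ M` on `{f ≥ M}` gives `P[f ≥ M] ≤ G x₀ / (δ M)`.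
-/

open Set Topology
open scoped ENNReal

theorem LowerSemicontinuousOn.exists_isMinOn' {α β : Type*} [TopologicalSpace α] [LinearOrder β]
    {f : α → β} {s : Set α} (hf : LowerSemicontinuousOn f s) (hsc : IsClosed s) {x₀ : α}
    (h₀ : x₀ ∈ s) (hc : ∀ᶠ x in cocompact α ⊓ 𝓟 s, f x₀ ≤ f x) : ∃ x ∈ s, IsMinOn f s x := by
  obtain ⟨K, hK, hKf⟩ := (hasBasis_cocompact.inf_principal _).eventually_iff.1 hc
  have hsub : insert x₀ (K ∩ s) ⊆ s := insert_subset_iff.2 ⟨h₀, inter_subset_right⟩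
  obtain ⟨x, hx, hxf⟩ := LowerSemicontinuousOn.exists_isMinOn (insert_nonempty _ _)
    ((hK.inter_right hsc).insert x₀) (hf.mono hsub)
  refine ⟨x, hsub hx, fun y hy => ?_⟩
  by_cases hyK : y ∈ K
  exacts [hxf (Or.inr ⟨hyK, hy⟩), (hxf (Or.inl rfl)).trans (hKf ⟨hyK, hy⟩)]

theorem exists_isMinOn_Ici_of_tendsto_atTop {Φ : ℝ → ℝ} (hlsc : LowerSemicontinuousOn Φ (Ici 0))
    (htop : Tendsto Φ atTop atTop) : ∃ x₀ ∈ Ici (0 : ℝ), IsMinOn Φ (Ici 0) x₀ := by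
  refine hlsc.exists_isMinOn' isClosed_Ici self_mem_Ici ?_
  obtain ⟨R, hR⟩ := eventually_atTop.1 (htop.eventually_ge_atTop (Φ 0))
  refine (hasBasis_cocompact.inf_principal _).eventually_iff.2 ⟨Icc 0 R, isCompact_Icc, ?_⟩
  rintro x ⟨hxK, hx0 : 0 ≤ x⟩
  exact hR x (le_of_not_ge fun hxR => hxK ⟨hx0, hxR⟩)

theorem eventually_mul_le_of_le_div {Φ : ℝ → ℝ} {δ : ℝ} (h : ∀ᶠ x in atTop, δ ≤ Φ x / x) :
    ∀ᶠ x in atTop, δ * x ≤ Φ x := by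
  filter_upwards [h, eventually_gt_atTop 0] with x hx hx0
  exact (le_div_iff₀ hx0).1 hx

theorem convex_sep_le_of_convex_comb_le {E : Type*} [AddCommMonoid E] [Module ℝ E] {S : Set E}
    {F : E → ℝ≥0∞} (hS : Convex ℝ S)
    (hF : ∀ f ∈ S, ∀ g ∈ S, ∀ a b : ℝ, 0 ≤ a → 0 ≤ b → a + b = 1 →
      F (a • f + b • g) ≤ ENNReal.ofReal a * F f + ENNReal.ofReal b * F g) (c : ℝ≥0∞) :
    Convex ℝ {f ∈ S | F f ≤ c} := by
  rintro f ⟨hfS, hfc⟩ g ⟨hgS, hgc⟩ a b ha hb hab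
  refine ⟨hS hfS hgS ha hb hab, ?_⟩
  calc F (a • f + b • g) ≤ ENNReal.ofReal a * F f + ENNReal.ofReal b * F g :=
        hF f hfS g hgS a b ha hb hab
    _ ≤ ENNReal.ofReal a * c + ENNReal.ofReal b * c := by gcongr
    _ = c := by rw [← add_mul, ← ENNReal.ofReal_add ha hb, hab, ENNReal.ofReal_one, one_mul]

section IntegralFunctional

variable {Ω : Type*} [MeasurableSpace Ω] {μ : Measure Ω}

theorem closedInMeasure_sep_le_of_le_liminf {S : Set (Ω → ℝ)} {F : (Ω → ℝ) → ℝ≥0∞}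
    (hS : ClosedInMeasure μ S)
    (hF : ∀ (f : ℕ → Ω → ℝ) (g : Ω → ℝ), (∀ n, f n ∈ S) → g ∈ S →
      TendstoInMeasure μ f atTop g → F g ≤ liminf (fun n => F (f n)) atTop) (c : ℝ≥0∞) :
    ClosedInMeasure μ {f ∈ S | F f ≤ c} := by
  intro f g hf hfg
  have hg : g ∈ S := hS f g (fun n => (hf n).1) hfg
  exact ⟨hg, (hF f g (fun n => (hf n).1) hg hfg).trans
    (liminf_le_of_frequently_le' (Frequently.of_forall fun n => (hf n).2))⟩

theorem convex_L0plus : Convex ℝ (L0plus μ) := by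
  rintro f ⟨hfm, hf0⟩ g ⟨hgm, hg0⟩ a b ha hb -
  refine ⟨(hfm.const_smul a).add (hgm.const_smul b), ?_⟩
  filter_upwards [hf0, hg0] with ω hfω hgω
  exact add_nonneg (mul_nonneg ha hfω) (mul_nonneg hb hgω)

theorem closedInMeasure_L0plus [μ.IsComplete] : ClosedInMeasure μ (L0plus μ) := by
  intro f g hf hfg
  obtain ⟨ns, -, hae⟩ := hfg.exists_seq_tendsto_ae
  refine ⟨aemeasurable_iff_measurable.1 (hfg.aemeasurable fun n => (hf n).1.aemeasurable), ?_⟩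
  filter_upwards [hae, ae_all_iff.2 fun n => (hf n).2] with ω hω hω0
  exact ge_of_tendsto' hω fun k => hω0 (ns k)

/-- `G f = E[Φ(f)]`; `ENNReal.ofReal` truncates negative values of `Φ` to `0`. -/
noncomputable def integralFunctional (μ : Measure Ω) (Φ : ℝ → ℝ) (f : Ω → ℝ) : ℝ≥0∞ :=
  ∫⁻ ω, ENNReal.ofReal (Φ (f ω)) ∂μ

variable {Φ : ℝ → ℝ}

theorem aemeasurable_ofReal_comp (hΦ : LowerSemicontinuousOn Φ (Ici 0)) {f : Ω → ℝ}
    (hf : AEMeasurable f μ) (hf0 : ∀ᵐ ω ∂μ, 0 ≤ f ω) :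
    AEMeasurable (fun ω => ENNReal.ofReal (Φ (f ω))) μ := by
  have hψ : LowerSemicontinuous (Φ ∘ fun x => max x 0) := by
    rw [← lowerSemicontinuousOn_univ_iff]
    exact hΦ.comp (continuous_id.max continuous_const).continuousOn fun x _ => le_max_right x 0
  refine ((ENNReal.measurable_ofReal.comp hψ.measurable).comp_aemeasurable hf).congr ?_
  filter_upwards [hf0] with ω hω
  simp [max_eq_left hω]

theorem integralFunctional_convex_comb_le (hconv : ConvexOn ℝ (Ici 0) Φ)
    (hlsc : LowerSemicontinuousOn Φ (Ici 0)) {f g : Ω → ℝ} (hf : f ∈ L0plus μ)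
    (hg : g ∈ L0plus μ) {a b : ℝ} (ha : 0 ≤ a) (hb : 0 ≤ b) (hab : a + b = 1) :
    integralFunctional μ Φ (a • f + b • g) ≤
      ENNReal.ofReal a * integralFunctional μ Φ f + ENNReal.ofReal b * integralFunctional μ Φ g := by
  have hpt : ∀ᵐ ω ∂μ, ENNReal.ofReal (Φ ((a • f + b • g) ω)) ≤
      ENNReal.ofReal a * ENNReal.ofReal (Φ (f ω)) + ENNReal.ofReal b * ENNReal.ofReal (Φ (g ω)) := by
    filter_upwards [hf.2, hg.2] with ω hfω hgω
    calc ENNReal.ofReal (Φ (a * f ω + b * g ω))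
        ≤ ENNReal.ofReal (a * Φ (f ω) + b * Φ (g ω)) :=
          ENNReal.ofReal_le_ofReal (hconv.2 hfω hgω ha hb hab)
      _ ≤ ENNReal.ofReal (a * Φ (f ω)) + ENNReal.ofReal (b * Φ (g ω)) := ENNReal.ofReal_add_le
      _ = _ := by rw [ENNReal.ofReal_mul ha, ENNReal.ofReal_mul hb]
  calc integralFunctional μ Φ (a • f + b • g)
      ≤ ∫⁻ ω, ENNReal.ofReal a * ENNReal.ofReal (Φ (f ω)) +
          ENNReal.ofReal b * ENNReal.ofReal (Φ (g ω)) ∂μ := lintegral_mono_ae hpt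
    _ = _ := by
      rw [lintegral_add_left' ((aemeasurable_ofReal_comp hlsc hf.1.aemeasurable hf.2).const_mul _),
        lintegral_const_mul' _ _ ENNReal.ofReal_ne_top,
        lintegral_const_mul' _ _ ENNReal.ofReal_ne_top]
      rfl

theorem integralFunctional_le_liminf_of_ae_tendsto (hlsc : LowerSemicontinuousOn Φ (Ici 0))
    {f : ℕ → Ω → ℝ} {g : Ω → ℝ} (hfm : ∀ n, AEMeasurable (f n) μ)
    (hf0 : ∀ n, ∀ᵐ ω ∂μ, 0 ≤ f n ω)
    (hfg : ∀ᵐ ω ∂μ, Tendsto (fun n => f n ω) atTop (𝓝 (g ω))) :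
    integralFunctional μ Φ g ≤ liminf (fun n => integralFunctional μ Φ (f n)) atTop := by
  have hlsc' := ENNReal.continuous_ofReal.comp_lowerSemicontinuousOn hlsc ENNReal.ofReal_mono
  have hpt : ∀ᵐ ω ∂μ, ENNReal.ofReal (Φ (g ω)) ≤
      liminf (fun n => ENNReal.ofReal (Φ (f n ω))) atTop := by
    filter_upwards [hfg, ae_all_iff.2 hf0] with ω hω hω0
    have hωs : Tendsto (fun n => f n ω) atTop (𝓝[Ici 0] (g ω)) :=
      tendsto_nhdsWithin_iff.2 ⟨hω, Eventually.of_forall hω0⟩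
    exact (LowerSemicontinuousWithinAt.le_liminf
      (hlsc' _ (isClosed_Ici.mem_of_tendsto hω (Eventually.of_forall hω0)))).trans
        hωs.liminf_le_liminf_comp
  exact (lintegral_mono_ae hpt).trans
    (lintegral_liminf_le' fun n => aemeasurable_ofReal_comp hlsc (hfm n) (hf0 n))

theorem integralFunctional_le_liminf_of_tendstoInMeasure (hlsc : LowerSemicontinuousOn Φ (Ici 0))
    {f : ℕ → Ω → ℝ} {g : Ω → ℝ} (hfm : ∀ n, AEMeasurable (f n) μ)
    (hf0 : ∀ n, ∀ᵐ ω ∂μ, 0 ≤ f n ω) (hfg : TendstoInMeasure μ f atTop g) :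
    integralFunctional μ Φ g ≤ liminf (fun n => integralFunctional μ Φ (f n)) atTop := by
  obtain ⟨m, hm, hm_top⟩ :=
    exists_seq_tendsto_liminf (f := atTop) (u := fun n => integralFunctional μ Φ (f n))
  have hfm_tendsto : TendstoInMeasure μ (fun k => f (m k)) atTop g :=
    fun ε hε => (hfg ε hε).comp hm_top
  obtain ⟨ns, hns, hae⟩ := hfm_tendsto.exists_seq_tendsto_ae
  calc integralFunctional μ Φ g
      ≤ liminf (fun k => integralFunctional μ Φ (f (m (ns k)))) atTop :=
        integralFunctional_le_liminf_of_ae_tendsto hlsc (fun k => hfm _) (fun k => hf0 _) hae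
    _ = liminf (fun n => integralFunctional μ Φ (f n)) atTop :=
        (hm.comp hns.tendsto_atTop).liminf_eq

theorem integralFunctional_const_le_of_isMinOn {x₀ : ℝ} (hmin : IsMinOn Φ (Ici 0) x₀)
    {f : Ω → ℝ} (hf0 : ∀ᵐ ω ∂μ, 0 ≤ f ω) :
    integralFunctional μ Φ (fun _ => x₀) ≤ integralFunctional μ Φ f :=
  lintegral_mono_ae (hf0.mono fun _ hω => ENNReal.ofReal_le_ofReal (hmin hω))

theorem integralFunctional_const_ne_top [IsFiniteMeasure μ] (x : ℝ) :
    integralFunctional μ Φ (fun _ => x) ≠ ∞ := by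
  simp [integralFunctional, lintegral_const, ENNReal.mul_ne_top, measure_ne_top]

theorem ofReal_mul_measure_le_integralFunctional {f : Ω → ℝ} (hf : Measurable f)
    (hf0 : ∀ᵐ ω ∂μ, 0 ≤ f ω) {M a : ℝ} (hΦ : ∀ x, M ≤ x → a ≤ Φ x) :
    ENNReal.ofReal a * μ {ω | M ≤ |f ω|} ≤ integralFunctional μ Φ f := by
  have hS : MeasurableSet {ω | M ≤ |f ω|} := measurableSet_le measurable_const hf.abs
  rw [← lintegral_indicator_const hS]
  refine lintegral_mono_ae (hf0.mono fun ω hω => ?_)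
  by_cases hωS : ω ∈ {ω | M ≤ |f ω|}
  · rw [indicator_of_mem hωS]
    exact ENNReal.ofReal_le_ofReal (hΦ _ (abs_of_nonneg hω ▸ hωS))
  · simp [indicator_of_notMem hωS]

theorem boundedInProbability_of_eventually_le {C : Set (Ω → ℝ)} {u : ℝ → ℝ≥0∞}
    (hu : Tendsto u atTop (𝓝 0)) (hC : ∀ᶠ M in atTop, ∀ f ∈ C, μ {ω | M ≤ |f ω|} ≤ u M) :
    BoundedInProbability μ C :=
  tendsto_of_tendsto_of_tendsto_of_le_of_le' tendsto_const_nhds hu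
    (Eventually.of_forall fun _ => zero_le) (hC.mono fun _ hM => iSup₂_le hM)

theorem boundedInProbability_integralFunctional_sublevel {δ : ℝ} (hδ : 0 < δ)
    (hgrow : ∀ᶠ x in atTop, δ * x ≤ Φ x) {c : ℝ≥0∞} (hc : c ≠ ∞) :
    BoundedInProbability μ {f ∈ L0plus μ | integralFunctional μ Φ f ≤ c} := by
  refine boundedInProbability_of_eventually_le (u := fun M => c / ENNReal.ofReal (δ * M)) ?_ ?_
  · simpa using ENNReal.Tendsto.const_div (a := c)
      (ENNReal.tendsto_ofReal_atTop.comp (tendsto_id.const_mul_atTop hδ)) (Or.inr hc)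
  filter_upwards [eventually_forall_ge_atTop.2 hgrow, eventually_gt_atTop 0] with M hM hM0
  rintro f ⟨⟨hfm, hf0⟩, hfc⟩
  have hδM : ∀ x, M ≤ x → δ * M ≤ Φ x := fun x hx =>
    (mul_le_mul_of_nonneg_left hx hδ.le).trans (hM x hx)
  rw [ENNReal.le_div_iff_mul_le (Or.inl (by positivity)) (Or.inl ENNReal.ofReal_ne_top), mul_comm]
  exact (ofReal_mul_measure_le_integralFunctional hfm hf0 hδM).trans hfc

end IntegralFunctional

theorem integral_functional_coercive_attains_inf_general
    {Ω : Type*} [MeasurableSpace Ω] (μ : Measure Ω) [IsProbabilityMeasure μ]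
    [μ.IsComplete]
    (Φ : ℝ → ℝ)
    (hΦconv : ConvexOn ℝ (Set.Ici (0 : ℝ)) Φ)
    (hΦlsc : LowerSemicontinuousOn Φ (Set.Ici (0 : ℝ)))
    (hΦgrowth : ∃ δ : ℝ, 0 < δ ∧ ∀ᶠ x : ℝ in atTop, δ ≤ Φ x / x)
    (G : (Ω → ℝ) → ENNReal)
    (hG : ∀ f : Ω → ℝ, G f = ∫⁻ ω, ENNReal.ofReal (Φ (f ω)) ∂μ) :
    -- `G` is convex on `L0+`
    (∀ f ∈ L0plus μ, ∀ g ∈ L0plus μ, ∀ a b : ℝ, 0 ≤ a → 0 ≤ b → a + b = 1 →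
        G (a • f + b • g) ≤ ENNReal.ofReal a * G f + ENNReal.ofReal b * G g) ∧
    -- `G` is lower semi-continuous with respect to convergence in probability
    (∀ (f : ℕ → Ω → ℝ) (g : Ω → ℝ), (∀ n, f n ∈ L0plus μ) → g ∈ L0plus μ →
        TendstoInMeasure μ f atTop g →
        G g ≤ liminf (fun n => G (f n)) atTop) ∧
    -- some lower-contour set is nonempty, convex, closed and bounded in probability
    (∃ c : ENNReal, {f ∈ L0plus μ | G f ≤ c}.Nonempty ∧
        Convex ℝ {f ∈ L0plus μ | G f ≤ c} ∧
        ClosedInMeasure μ {f ∈ L0plus μ | G f ≤ c} ∧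
        BoundedInProbability μ {f ∈ L0plus μ | G f ≤ c}) ∧
    -- `G` attains its infimum on `L0+`
    (∃ f₀ ∈ L0plus μ, ∀ f ∈ L0plus μ, G f₀ ≤ G f) := by
  obtain ⟨δ, hδ, hΦδ⟩ := hΦgrowth
  have hgrow := eventually_mul_le_of_le_div hΦδ
  obtain ⟨x₀, hx₀, hmin⟩ := exists_isMinOn_Ici_of_tendsto_atTop hΦlsc
    (tendsto_atTop_mono' _ hgrow (tendsto_id.const_mul_atTop hδ))
  obtain rfl : G = integralFunctional μ Φ := funext hG
  have hconv := fun f (hf : f ∈ L0plus μ) g (hg : g ∈ L0plus μ) (a b : ℝ) (ha : 0 ≤ a)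
      (hb : 0 ≤ b) (hab : a + b = 1) =>
    integralFunctional_convex_comb_le hΦconv hΦlsc hf hg ha hb hab
  have hlsc := fun (f : ℕ → Ω → ℝ) (g : Ω → ℝ) (hf : ∀ n, f n ∈ L0plus μ) (_ : g ∈ L0plus μ)
      (hfg : TendstoInMeasure μ f atTop g) =>
    integralFunctional_le_liminf_of_tendstoInMeasure hΦlsc (fun n => (hf n).1.aemeasurable)
      (fun n => (hf n).2) hfg
  have hf₀ : (fun _ => x₀) ∈ L0plus μ := ⟨measurable_const, ae_of_all _ fun _ => hx₀⟩
  refine ⟨hconv, hlsc, ⟨_, ⟨_, hf₀, le_rfl⟩, convex_sep_le_of_convex_comb_le convex_L0plus hconv _,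
    closedInMeasure_sep_le_of_le_liminf closedInMeasure_L0plus hlsc _,
    boundedInProbability_integralFunctional_sublevel hδ hgrow
      (integralFunctional_const_ne_top x₀)⟩,
    _, hf₀, fun f hf => integralFunctional_const_le_of_isMinOn hmin hf.2⟩

/-- If `Φ : [0,∞) → [0,∞)` is convex, lower semi-continuous and
`liminf_{x→∞} Φ(x)/x > 0`, then `G(f) = E[Φ(f)]` is convex on `L0+`, sequentially lower
semi-continuous with respect to convergence in probability, has a nonempty, convex,
closed and bounded-in-probability lower-contour set, and attains its infimum on `L0+`. -/
theorem integral_functional_coercive_attains_inf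
    {Ω : Type*} [MeasurableSpace Ω] (μ : Measure Ω) [IsProbabilityMeasure μ]
    [μ.IsComplete]
    (Φ : ℝ → ℝ)
    (hΦconv : ConvexOn ℝ (Set.Ici (0 : ℝ)) Φ)
    (hΦlsc : LowerSemicontinuousOn Φ (Set.Ici (0 : ℝ)))
    (hΦnonneg : ∀ x : ℝ, 0 ≤ x → 0 ≤ Φ x)
    (hΦgrowth : ∃ δ : ℝ, 0 < δ ∧ ∀ᶠ x : ℝ in atTop, δ ≤ Φ x / x)
    (G : (Ω → ℝ) → ENNReal)
    (hG : ∀ f : Ω → ℝ, G f = ∫⁻ ω, ENNReal.ofReal (Φ (f ω)) ∂μ) :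
    -- `G` is convex on `L0+`
    (∀ f ∈ L0plus μ, ∀ g ∈ L0plus μ, ∀ a b : ℝ, 0 ≤ a → 0 ≤ b → a + b = 1 →
        G (a • f + b • g) ≤ ENNReal.ofReal a * G f + ENNReal.ofReal b * G g) ∧
    -- `G` is lower semi-continuous with respect to convergence in probability
    (∀ (f : ℕ → Ω → ℝ) (g : Ω → ℝ), (∀ n, f n ∈ L0plus μ) → g ∈ L0plus μ →
        TendstoInMeasure μ f atTop g →
        G g ≤ liminf (fun n => G (f n)) atTop) ∧
    -- some lower-contour set is nonempty, convex, closed and bounded in probability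
    (∃ c : ENNReal, {f ∈ L0plus μ | G f ≤ c}.Nonempty ∧
        Convex ℝ {f ∈ L0plus μ | G f ≤ c} ∧
        ClosedInMeasure μ {f ∈ L0plus μ | G f ≤ c} ∧
        BoundedInProbability μ {f ∈ L0plus μ | G f ≤ c}) ∧
    -- `G` attains its infimum on `L0+`
    (∃ f₀ ∈ L0plus μ, ∀ f ∈ L0plus μ, G f₀ ≤ G f) :=
  integral_functional_coercive_attains_inf_general μ Φ hΦconv hΦlsc hΦgrowth G hG
end

section
/- Let (Ω,F,P) be a complete probability space and let C be a closed, convex, bounded-in-probability subset of L0+. Then for every net (x_α)_{α∈A} in C there exists a subnet of convex combinations (y_β)_{β∈B} of (x_α) converging in probability to some y ∈ C. -/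
open MeasureTheory Filter

/-- A net `y : B → X` is a *subnet of convex combinations* of the net `x : A → X`
if there is a map `D` assigning to each `β ∈ B` a nonempty finite subset of `A` such that
(1) `y β` lies in the convex hull of `{x α : α ∈ D β}`, and
(2) for each `α ∈ A` there is `β ∈ B` with `α' ⪰ α` for every `α' ∈ ⋃_{β' ⪰ β} D β'`. -/
def SubnetOfConvexCombinations {X : Type*} [AddCommGroup X] [Module ℝ X]
    {A B : Type*} [Preorder A] [Preorder B] (x : A → X) (y : B → X) : Prop :=
  ∃ D : B → Finset A,
    (∀ β, (D β).Nonempty) ∧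
    (∀ β, y β ∈ convexHull ℝ (x '' ↑(D β))) ∧
    (∀ α : A, ∃ β : B, ∀ β' : B, β ≤ β' → ∀ α' ∈ D β', α ≤ α')

open scoped Topology

/-! The functional `Φ g = E[1 - exp (-g)]` takes values in `[0, 1]` and is uniformly
concave on `L0+` relative to convergence in probability: if `Φ` at the midpoint of `g₁, g₂`
exceeds the average of `Φ g₁` and `Φ g₂` by little, then `g₁` and `g₂` are close in probability,
uniformly over a set bounded in probability. Let `c α` be the supremum of `Φ` on the convex hull
of the tail `{x α' | α ≤ α'}` and pick `f (α, n)` in that hull with `Φ (f (α, n)) > c α - 1/(n+1)`.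
Two such elements with large indices have their midpoint in a common tail hull, whose supremum
is close to `⨅ α, c α`, so their midpoint gap is small: `f` is a Cauchy net in probability.
Along a monotone sequence of indices Borel–Cantelli gives an a.e. limit `z`, the whole net
converges to `z` in probability, and `z ∈ C` as `C` is closed. The net `f` itself is the subnet
of convex combinations. -/

lemma one_sub_exp_neg_pos {t : ℝ} (ht : 0 < t) : 0 < 1 - Real.exp (-t) := by
  linarith [Real.exp_lt_one_iff.2 (neg_lt_zero.2 ht)]

noncomputable def expUtility (t : ℝ) : ℝ := 1 - Real.exp (-max t 0)

lemma expUtility_nonneg (t : ℝ) : 0 ≤ expUtility t := by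
  have : Real.exp (-max t 0) ≤ 1 := Real.exp_le_one_iff.2 (by simp)
  unfold expUtility; linarith

lemma expUtility_le_one (t : ℝ) : expUtility t ≤ 1 := by
  have := Real.exp_pos (-max t 0)
  unfold expUtility; linarith

lemma continuous_expUtility : Continuous expUtility := by
  unfold expUtility; fun_prop

lemma expUtility_midpoint_sub_average {a b : ℝ} (ha : 0 ≤ a) (hb : 0 ≤ b) :
    expUtility ((a + b) / 2) - (expUtility a + expUtility b) / 2
      = (Real.exp (-(a / 2)) - Real.exp (-(b / 2))) ^ 2 / 2 := by
  have hab : 0 ≤ (a + b) / 2 := by positivity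
  simp only [expUtility, max_eq_left ha, max_eq_left hb, max_eq_left hab]
  have hsq : ∀ t : ℝ, Real.exp (-t) = Real.exp (-(t / 2)) ^ 2 := fun t => by
    rw [sq, ← Real.exp_add]; ring_nf
  rw [hsq a, hsq b, show -((a + b) / 2) = -(a / 2) + -(b / 2) by ring, Real.exp_add]
  ring

-- Lower bound for `(exp (-(a / 2)) - exp (-(b / 2))) ^ 2 / 2` when `0 ≤ a ≤ b ≤ M`, `η ≤ b - a`:
-- factor out `exp (-(a / 2)) ≥ exp (-(M / 2))`, leaving `1 - exp (-((b - a) / 2))`.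
noncomputable def concavityModulus (M η : ℝ) : ℝ :=
  Real.exp (-M) * (1 - Real.exp (-(η / 2))) ^ 2 / 2

lemma concavityModulus_pos (M : ℝ) {η : ℝ} (hη : 0 < η) : 0 < concavityModulus M η := by
  have := one_sub_exp_neg_pos (half_pos hη)
  unfold concavityModulus
  positivity

lemma concavityModulus_le_expUtility_midpoint_sub_average {M η a b : ℝ} (ha : 0 ≤ a)
    (hb : 0 ≤ b) (haM : a ≤ M) (hbM : b ≤ M) (hη : 0 < η) (hab : η ≤ |a - b|) :
    concavityModulus M η ≤ expUtility ((a + b) / 2) - (expUtility a + expUtility b) / 2 := by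
  wlog hle : a ≤ b generalizing a b
  · rw [add_comm a, add_comm (expUtility a)]
    exact this hb ha hbM haM (by rwa [abs_sub_comm]) (le_of_not_ge hle)
  rw [abs_sub_comm, abs_of_nonneg (by linarith)] at hab
  rw [expUtility_midpoint_sub_average ha hb, concavityModulus]
  have hfactor : Real.exp (-(a / 2)) - Real.exp (-(b / 2))
      = Real.exp (-(a / 2)) * (1 - Real.exp (-((b - a) / 2))) := by
    rw [mul_sub, mul_one, ← Real.exp_add]; ring_nf
  have hM : Real.exp (-M) = Real.exp (-(M / 2)) ^ 2 := by
    rw [sq, ← Real.exp_add]; ring_nf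
  have hη' := one_sub_exp_neg_pos (half_pos hη)
  have hlow : Real.exp (-(M / 2)) * (1 - Real.exp (-(η / 2)))
      ≤ Real.exp (-(a / 2)) * (1 - Real.exp (-((b - a) / 2))) := by
    gcongr
  rw [hfactor, hM, ← mul_pow]
  gcongr

noncomputable def midpointGap {E : Type*} [AddCommGroup E] [Module ℝ E] (Φ : E → ℝ)
    (a b : E) : ℝ :=
  Φ (midpoint ℝ a b) - (Φ a + Φ b) / 2

lemma exists_net_eventually_midpointGap_le {E A : Type*} [AddCommGroup E] [Module ℝ E]
    [Preorder A] [Nonempty A] {T : A → Set E} (hT : Antitone T) (hconv : ∀ α, Convex ℝ (T α))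
    (hne : ∀ α, (T α).Nonempty) {Φ : E → ℝ} (hΦa : BddAbove (Set.range Φ))
    (hΦb : BddBelow (Set.range Φ)) :
    ∃ f : A × ℕ → E, (∀ β, f β ∈ T β.1) ∧
      ∀ κ > 0, ∃ β₀, ∀ β β', β₀ ≤ β → β₀ ≤ β' → midpointGap Φ (f β) (f β') ≤ κ := by
  set c : A → ℝ := fun α => sSup (Φ '' T α)
  have hc_bdd : ∀ α, BddAbove (Φ '' T α) := fun α => hΦa.mono (Set.image_subset_range _ _)
  have hle_c : ∀ {α e}, e ∈ T α → Φ e ≤ c α := fun he => le_csSup (hc_bdd _) ⟨_, he, rfl⟩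
  have hc_bddBelow : BddBelow (Set.range c) := by
    obtain ⟨m, hm⟩ := hΦb
    refine ⟨m, ?_⟩
    rintro _ ⟨α, rfl⟩
    obtain ⟨e, he⟩ := hne α
    exact (hm ⟨e, rfl⟩).trans (hle_c he)
  have hnear : ∀ β : A × ℕ, ∃ e ∈ T β.1, c β.1 - 1 / (β.2 + 1) < Φ e := fun β => by
    obtain ⟨_, ⟨e, he, rfl⟩, hlt⟩ := exists_lt_of_lt_csSup ((hne β.1).image Φ)
      (sub_lt_self (c β.1) (Nat.one_div_pos_of_nat (n := β.2)))
    exact ⟨e, he, hlt⟩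
  choose f hfT hfΦ using hnear
  refine ⟨f, hfT, fun κ hκ => ?_⟩
  obtain ⟨α₀, hα₀⟩ := exists_lt_of_ciInf_lt (lt_add_of_pos_right (⨅ α, c α) (half_pos hκ))
  obtain ⟨N, hN⟩ := exists_nat_one_div_lt (half_pos hκ)
  have hlow : ∀ β : A × ℕ, (α₀, N) ≤ β → (⨅ α, c α) - κ / 2 < Φ (f β) := fun β hβ => by
    have hn : 1 / ((β.2 : ℝ) + 1) ≤ 1 / ((N : ℝ) + 1) := Nat.one_div_le_one_div hβ.2
    linarith [ciInf_le hc_bddBelow β.1, hfΦ β]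
  refine ⟨(α₀, N), fun β β' hβ hβ' => ?_⟩
  have hmid : Φ (midpoint ℝ (f β) (f β')) ≤ c α₀ :=
    hle_c ((hconv α₀).midpoint_mem (hT hβ.1 (hfT β)) (hT hβ'.1 (hfT β')))
  unfold midpointGap
  linarith [hlow β hβ, hlow β' hβ']

section ExpectedUtility

variable {Ω : Type*} [MeasurableSpace Ω] (μ : Measure Ω)

noncomputable def expectedUtility (g : Ω → ℝ) : ℝ := ∫ ω, expUtility (g ω) ∂μ

lemma bddAbove_range_expectedUtility [IsProbabilityMeasure μ] :
    BddAbove (Set.range (expectedUtility μ)) := by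
  refine ⟨1, ?_⟩
  rintro _ ⟨g, rfl⟩
  simpa [expectedUtility] using integral_mono_of_nonneg
    (ae_of_all μ fun ω => expUtility_nonneg (g ω)) (integrable_const (1 : ℝ))
    (ae_of_all μ fun ω => expUtility_le_one (g ω))

lemma bddBelow_range_expectedUtility : BddBelow (Set.range (expectedUtility μ)) := by
  refine ⟨0, ?_⟩
  rintro _ ⟨g, rfl⟩
  exact integral_nonneg fun ω => expUtility_nonneg (g ω)

variable {μ}

lemma integrable_expUtility_comp [IsFiniteMeasure μ] {g : Ω → ℝ} (hg : Measurable g) :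
    Integrable (fun ω => expUtility (g ω)) μ := by
  refine (integrable_const (1 : ℝ)).mono'
    (continuous_expUtility.measurable.comp hg).aestronglyMeasurable (ae_of_all μ fun ω => ?_)
  rw [Real.norm_eq_abs, abs_of_nonneg (expUtility_nonneg _)]
  exact expUtility_le_one _

lemma concavityModulus_mul_measureReal_le [IsFiniteMeasure μ] {g₁ g₂ : Ω → ℝ}
    (hg₁ : g₁ ∈ L0plus μ) (hg₂ : g₂ ∈ L0plus μ) (M : ℝ) {η : ℝ} (hη : 0 < η) :
    concavityModulus M η * μ.real {ω | η ≤ |g₁ ω - g₂ ω| ∧ |g₁ ω| ≤ M ∧ |g₂ ω| ≤ M}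
      ≤ midpointGap (expectedUtility μ) g₁ g₂ := by
  set G := {ω | η ≤ |g₁ ω - g₂ ω| ∧ |g₁ ω| ≤ M ∧ |g₂ ω| ≤ M}
  have hmid : ∀ ω, midpoint ℝ g₁ g₂ ω = (g₁ ω + g₂ ω) / 2 := fun ω => by
    simp [midpoint_eq_smul_add]; ring
  have hGmeas : MeasurableSet G :=
    (measurableSet_le measurable_const (hg₁.1.sub hg₂.1).abs).inter
      ((measurableSet_le hg₁.1.abs measurable_const).inter
        (measurableSet_le hg₂.1.abs measurable_const))
  have hpointwise : G.indicator (fun _ => concavityModulus M η) ≤ᵐ[μ] fun ω =>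
      expUtility (midpoint ℝ g₁ g₂ ω) - (expUtility (g₁ ω) + expUtility (g₂ ω)) / 2 := by
    filter_upwards [hg₁.2, hg₂.2] with ω h₁ h₂
    rw [hmid ω]
    by_cases hω : ω ∈ G
    · rw [Set.indicator_of_mem hω]
      exact concavityModulus_le_expUtility_midpoint_sub_average h₁ h₂
        (le_abs_self _ |>.trans hω.2.1) (le_abs_self _ |>.trans hω.2.2) hη hω.1
    · rw [Set.indicator_of_notMem hω, expUtility_midpoint_sub_average h₁ h₂]
      positivity
  have hint₁ := integrable_expUtility_comp (μ := μ) hg₁.1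
  have hint₂ := integrable_expUtility_comp (μ := μ) hg₂.1
  have hintmid : Integrable (fun ω => expUtility (midpoint ℝ g₁ g₂ ω)) μ := by
    simp only [hmid]
    exact integrable_expUtility_comp ((hg₁.1.add hg₂.1).div_const 2)
  have hintavg : Integrable (fun ω => (expUtility (g₁ ω) + expUtility (g₂ ω)) / 2) μ :=
    (hint₁.add hint₂).div_const 2
  calc concavityModulus M η * μ.real G
      = ∫ ω, G.indicator (fun _ => concavityModulus M η) ω ∂μ := by
        rw [integral_indicator_const _ hGmeas, smul_eq_mul, mul_comm]
    _ ≤ ∫ ω, (expUtility (midpoint ℝ g₁ g₂ ω)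
          - (expUtility (g₁ ω) + expUtility (g₂ ω)) / 2) ∂μ :=
        integral_mono_ae ((integrable_const _).indicator hGmeas) (hintmid.sub hintavg)
          hpointwise
    _ = midpointGap (expectedUtility μ) g₁ g₂ := by
        rw [integral_sub hintmid hintavg, integral_div, integral_add hint₁ hint₂]
        rfl

lemma measure_le_abs_sub_le_midpointGap [IsFiniteMeasure μ] {g₁ g₂ : Ω → ℝ}
    (hg₁ : g₁ ∈ L0plus μ) (hg₂ : g₂ ∈ L0plus μ) (M : ℝ) {η : ℝ} (hη : 0 < η) :
    μ {ω | η ≤ |g₁ ω - g₂ ω|}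
      ≤ ENNReal.ofReal (midpointGap (expectedUtility μ) g₁ g₂ / concavityModulus M η)
        + μ {ω | M ≤ |g₁ ω|} + μ {ω | M ≤ |g₂ ω|} := by
  set G := {ω | η ≤ |g₁ ω - g₂ ω| ∧ |g₁ ω| ≤ M ∧ |g₂ ω| ≤ M}
  have hG : μ G
      ≤ ENNReal.ofReal (midpointGap (expectedUtility μ) g₁ g₂ / concavityModulus M η) := by
    rw [← ofReal_measureReal]
    refine ENNReal.ofReal_le_ofReal ((le_div_iff₀' (concavityModulus_pos M hη)).2 ?_)
    exact concavityModulus_mul_measureReal_le hg₁ hg₂ M hη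
  have hcover : {ω | η ≤ |g₁ ω - g₂ ω|} ⊆ G ∪ {ω | M ≤ |g₁ ω|} ∪ {ω | M ≤ |g₂ ω|} := by
    intro ω hω
    by_contra h
    simp only [Set.mem_union, Set.mem_ofPred_eq, not_or, not_le] at h
    exact h.1.1 ⟨hω, h.1.2.le, h.2.le⟩
  calc μ {ω | η ≤ |g₁ ω - g₂ ω|}
      ≤ μ (G ∪ {ω | M ≤ |g₁ ω|} ∪ {ω | M ≤ |g₂ ω|}) := measure_mono hcover
    _ ≤ μ G + μ {ω | M ≤ |g₁ ω|} + μ {ω | M ≤ |g₂ ω|} :=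
        (measure_union_le _ _).trans (add_le_add_left (measure_union_le _ _) _)
    _ ≤ _ := by gcongr

lemma BoundedInProbability.exists_forall_measure_le {C : Set (Ω → ℝ)}
    (hC : BoundedInProbability μ C) {ε : ENNReal} (hε : 0 < ε) :
    ∃ M, ∀ f ∈ C, μ {ω | M ≤ |f ω|} ≤ ε := by
  obtain ⟨M, hM⟩ := (hC.eventually_lt_const hε).exists
  exact ⟨M, fun f hf => (le_biSup (fun f => μ {ω | M ≤ |f ω|}) hf).trans hM.le⟩

lemma BoundedInProbability.exists_forall_measure_le_of_midpointGap_le [IsFiniteMeasure μ]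
    {C : Set (Ω → ℝ)} (hsub : C ⊆ L0plus μ) (hC : BoundedInProbability μ C) {η : ℝ}
    (hη : 0 < η) :
    ∃ κ > 0, ∀ g₁ ∈ C, ∀ g₂ ∈ C, midpointGap (expectedUtility μ) g₁ g₂ ≤ κ →
      μ {ω | η ≤ |g₁ ω - g₂ ω|} ≤ ENNReal.ofReal η := by
  obtain ⟨M, hM⟩ :=
    hC.exists_forall_measure_le (ENNReal.ofReal_pos.2 (by positivity : 0 < η / 4))
  have hκ := concavityModulus_pos M hη
  refine ⟨concavityModulus M η * (η / 2), by positivity, fun g₁ hg₁ g₂ hg₂ hgap => ?_⟩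
  have hratio : midpointGap (expectedUtility μ) g₁ g₂ / concavityModulus M η ≤ η / 2 := by
    rwa [div_le_iff₀' hκ]
  calc μ {ω | η ≤ |g₁ ω - g₂ ω|}
      ≤ ENNReal.ofReal (η / 2) + ENNReal.ofReal (η / 4) + ENNReal.ofReal (η / 4) := by
        grw [measure_le_abs_sub_le_midpointGap (hsub hg₁) (hsub hg₂) M hη, hM g₁ hg₁,
          hM g₂ hg₂, hratio]
    _ = ENNReal.ofReal η := by
        rw [← ENNReal.ofReal_add (by positivity) (by positivity),
          ← ENNReal.ofReal_add (by positivity) (by positivity)]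
        ring_nf

end ExpectedUtility

section CauchyInMeasure

variable {Ω E ι : Type*} [MeasurableSpace Ω] {μ : Measure Ω}

def CauchyInMeasure [Dist E] [Preorder ι] (μ : Measure Ω) (f : ι → Ω → E) : Prop :=
  ∀ ε > 0, ∃ i₀, ∀ i j, i₀ ≤ i → i₀ ≤ j → μ {ω | ε ≤ dist (f i ω) (f j ω)} ≤ ENNReal.ofReal ε

variable [PseudoMetricSpace E]

lemma measure_le_dist_le_add (f g h : Ω → E) (ε₁ ε₂ : ℝ) :
    μ {ω | ε₁ + ε₂ ≤ dist (f ω) (h ω)}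
      ≤ μ {ω | ε₁ ≤ dist (f ω) (g ω)} + μ {ω | ε₂ ≤ dist (g ω) (h ω)} := by
  refine (measure_mono fun ω hω => ?_).trans (measure_union_le _ _)
  by_contra hnot
  simp only [Set.mem_union, Set.mem_ofPred_eq, not_or, not_le] at hω hnot
  linarith [dist_triangle (f ω) (g ω) (h ω)]

lemma ae_cauchySeq_of_tsum_measure_ne_top {g : ℕ → Ω → E} {ε : ℕ → ℝ} (hε : Summable ε)
    (h : ∑' k, μ {ω | ε k ≤ dist (g k ω) (g (k + 1) ω)} ≠ ⊤) :
    ∀ᵐ ω ∂μ, CauchySeq fun k => g k ω := by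
  filter_upwards [ae_eventually_notMem h] with ω hω
  refine cauchySeq_of_summable_dist (hε.of_norm_bounded_eventually_nat ?_)
  filter_upwards [hω] with k hk
  rw [Real.norm_of_nonneg dist_nonneg]
  exact (not_le.1 hk).le

lemma tendstoInMeasure_of_eventually_close {l : Filter ι} {f : ι → Ω → E} {g : ℕ → Ω → E}
    {z : Ω → E} {ε : ℕ → ℝ} (hε : Tendsto ε atTop (𝓝 0)) (hg : TendstoInMeasure μ g atTop z)
    (hfg : ∀ k, ∀ᶠ i in l, μ {ω | ε k ≤ dist (g k ω) (f i ω)} ≤ ENNReal.ofReal (ε k)) :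
    TendstoInMeasure μ f l z := by
  rw [tendstoInMeasure_iff_dist]
  intro η hη
  rw [ENNReal.tendsto_nhds_zero]
  intro δ hδ
  have hδ2 : 0 < δ / 2 := ENNReal.half_pos hδ.ne'
  have hsmall : ∀ᶠ k in atTop, ε k < η / 2 := hε.eventually (gt_mem_nhds (half_pos hη))
  have hsmall' : ∀ᶠ k in atTop, ENNReal.ofReal (ε k) < δ / 2 :=
    (ENNReal.ofReal_zero ▸ ENNReal.tendsto_ofReal hε).eventually (gt_mem_nhds hδ2)
  have hnear : ∀ᶠ k in atTop, μ {ω | η / 2 ≤ dist (g k ω) (z ω)} ≤ δ / 2 :=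
    ENNReal.tendsto_nhds_zero.1 (tendstoInMeasure_iff_dist.1 hg (η / 2) (half_pos hη)) _ hδ2
  obtain ⟨k, hk, hk', hk''⟩ := (hsmall.and (hsmall'.and hnear)).exists
  filter_upwards [hfg k] with i hi
  calc μ {ω | η ≤ dist (f i ω) (z ω)}
      ≤ μ {ω | η / 2 ≤ dist (f i ω) (g k ω)} + μ {ω | η / 2 ≤ dist (g k ω) (z ω)} := by
        simpa only [add_halves] using measure_le_dist_le_add (μ := μ) (f i) (g k) z (η / 2) (η / 2)
    _ ≤ δ / 2 + δ / 2 := by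
        gcongr
        refine (measure_mono fun ω hω => ?_).trans (hi.trans hk'.le)
        simp only [Set.mem_ofPred_eq, dist_comm (g k ω)] at hω ⊢
        linarith
    _ = δ := ENNReal.add_halves δ

lemma exists_monotone_forall_le [Preorder ι] [IsDirected ι (· ≤ ·)] (u : ℕ → ι) :
    ∃ s : ℕ → ι, Monotone s ∧ ∀ k, u k ≤ s k := by
  let s : ℕ → ι := fun k =>
    Nat.rec (u 0) (fun k sk => (directed_of (· ≤ ·) sk (u (k + 1))).choose) k
  have hstep : ∀ k, s k ≤ s (k + 1) ∧ u (k + 1) ≤ s (k + 1) := fun k =>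
    (directed_of (· ≤ ·) (s k) (u (k + 1))).choose_spec
  refine ⟨s, monotone_nat_of_le_succ fun k => (hstep k).1, fun k => ?_⟩
  cases k with
  | zero => exact le_rfl
  | succ k => exact (hstep k).2

theorem CauchyInMeasure.exists_tendstoInMeasure [IsFiniteMeasure μ] [CompleteSpace E]
    [Preorder ι] [IsDirected ι (· ≤ ·)] {f : ι → Ω → E} (hf : CauchyInMeasure μ f)
    (hmeas : ∀ i, AEStronglyMeasurable (f i) μ) :
    ∃ (s : ℕ → ι) (z : Ω → E),
      TendstoInMeasure μ (fun k => f (s k)) atTop z ∧ TendstoInMeasure μ f atTop z := by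
  choose i₀ hi₀ using fun k : ℕ => hf ((1 / 2 : ℝ) ^ k) (by positivity)
  obtain ⟨s, hs_mono, hs⟩ := exists_monotone_forall_le i₀
  have hsum : ∑' k, μ {ω | (1 / 2 : ℝ) ^ k ≤ dist (f (s k) ω) (f (s (k + 1)) ω)} ≠ ⊤ := by
    refine ne_top_of_le_ne_top ?_ (ENNReal.tsum_le_tsum fun k =>
      hi₀ k _ _ (hs k) ((hs k).trans (hs_mono k.le_succ)))
    rw [← ENNReal.ofReal_tsum_of_nonneg (fun k => by positivity) summable_geometric_two]
    exact ENNReal.ofReal_ne_top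
  have hcauchy := ae_cauchySeq_of_tsum_measure_ne_top summable_geometric_two hsum
  let z : Ω → E := fun ω =>
    letI : Nonempty E := ⟨f (s 0) ω⟩
    limUnder atTop fun k => f (s k) ω
  have hz : ∀ᵐ ω ∂μ, Tendsto (fun k => f (s k) ω) atTop (𝓝 (z ω)) :=
    hcauchy.mono fun ω h => tendsto_nhds_limUnder (cauchySeq_tendsto_of_complete h)
  have hseq := tendstoInMeasure_of_tendsto_ae (fun k => hmeas (s k)) hz
  refine ⟨s, z, hseq, tendstoInMeasure_of_eventually_close
    (tendsto_pow_atTop_nhds_zero_of_lt_one (r := (1 / 2 : ℝ)) (by norm_num) (by norm_num)) hseq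
    fun k => ?_⟩
  filter_upwards [eventually_ge_atTop (i₀ k)] with i hi using hi₀ k (s k) i (hs k) hi

end CauchyInMeasure

instance Prod.isDirected_le {α β : Type*} [LE α] [LE β] [IsDirected α (· ≤ ·)]
    [IsDirected β (· ≤ ·)] : IsDirected (α × β) (· ≤ ·) where
  directed a b := by
    obtain ⟨c₁, hac₁, hbc₁⟩ := directed_of (· ≤ ·) a.1 b.1
    obtain ⟨c₂, hac₂, hbc₂⟩ := directed_of (· ≤ ·) a.2 b.2
    exact ⟨(c₁, c₂), ⟨hac₁, hac₂⟩, ⟨hbc₁, hbc₂⟩⟩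

section TailHull

variable {E A : Type*} [AddCommGroup E] [Module ℝ E] [Preorder A]

def tailHull (x : A → E) (α : A) : Set E := convexHull ℝ (x '' Set.Ici α)

lemma tailHull_antitone (x : A → E) : Antitone (tailHull x) := fun _ _ h =>
  convexHull_mono (Set.image_mono (Set.Ici_subset_Ici.2 h))

lemma self_mem_tailHull (x : A → E) (α : A) : x α ∈ tailHull x α :=
  subset_convexHull ℝ _ ⟨α, Set.self_mem_Ici, rfl⟩

lemma tailHull_subset {C : Set E} (hC : Convex ℝ C) {x : A → E} (hx : ∀ α, x α ∈ C) (α : A) :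
    tailHull x α ⊆ C :=
  convexHull_min (Set.image_subset_iff.2 fun α' _ => hx α') hC

lemma exists_finset_of_mem_tailHull {x : A → E} {α : A} {y : E} (hy : y ∈ tailHull x α) :
    ∃ D : Finset A, D.Nonempty ∧ (∀ α' ∈ D, α ≤ α') ∧ y ∈ convexHull ℝ (x '' ↑D) := by
  classical
  rw [tailHull, convexHull_eq_union_convexHull_finite_subsets] at hy
  obtain ⟨t, ht, hyt⟩ := Set.mem_iUnion₂.1 hy
  obtain ⟨D, hD, rfl⟩ := Finset.subset_set_image_iff.1 ht
  rw [Finset.coe_image] at hyt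
  exact ⟨D, Finset.coe_nonempty.1 (convexHull_nonempty_iff.1 ⟨y, hyt⟩).of_image,
    fun α' h => hD h, hyt⟩

lemma subnetOfConvexCombinations_of_mem_tailHull {B : Type*} [Preorder B] [Nonempty B]
    [IsDirected B (· ≤ ·)] {x : A → E} {y : B → E} {p : B → A}
    (hy : ∀ β, y β ∈ tailHull x (p β)) (hp : Tendsto p atTop atTop) :
    SubnetOfConvexCombinations x y := by
  choose D hDne hDge hyD using fun β => exists_finset_of_mem_tailHull (hy β)
  refine ⟨D, hDne, hyD, fun α => ?_⟩
  obtain ⟨β, hβ⟩ := eventually_atTop.1 (hp.eventually (eventually_ge_atTop α))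
  exact ⟨β, fun β' hβ' α' hα' => (hβ β' hβ').trans (hDge β' α' hα')⟩

end TailHull

/-- (Komlós-type result in `L0+`.) Let `C` be a closed, convex,
bounded-in-probability subset of `L0+` on a complete probability space. Then every net
in `C` admits a subnet of convex combinations converging in probability to some
element of `C`. -/
theorem exists_convex_combination_subnet_L0plus
    {Ω : Type*} [MeasurableSpace Ω] (μ : Measure Ω) [IsProbabilityMeasure μ]
    (C : Set (Ω → ℝ)) (hsub : C ⊆ L0plus μ)
    (hcl : ClosedInMeasure μ C) (hconv : Convex ℝ C)
    (hbd : BoundedInProbability μ C)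
    (A : Type) (_ : Preorder A) (_ : Nonempty A) (_ : IsDirected A (· ≤ ·))
    (x : A → Ω → ℝ) (hx : ∀ α, x α ∈ C) :
    ∃ (B : Type) (_ : Preorder B) (_ : Nonempty B) (_ : IsDirected B (· ≤ ·))
      (y : B → Ω → ℝ) (z : Ω → ℝ),
      SubnetOfConvexCombinations x y ∧ TendstoInMeasure μ y atTop z ∧ z ∈ C := by
  obtain ⟨f, hfT, hgap⟩ := exists_net_eventually_midpointGap_le (tailHull_antitone x)
    (fun α => convex_convexHull ℝ _) (fun α => ⟨x α, self_mem_tailHull x α⟩)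
    (bddAbove_range_expectedUtility μ) (bddBelow_range_expectedUtility μ)
  have hfC : ∀ β, f β ∈ C := fun β => tailHull_subset hconv hx β.1 (hfT β)
  have hcauchy : CauchyInMeasure μ f := fun η hη => by
    obtain ⟨κ, hκ, hsep⟩ := hbd.exists_forall_measure_le_of_midpointGap_le hsub hη
    obtain ⟨β₀, hβ₀⟩ := hgap κ hκ
    exact ⟨β₀, fun β β' hβ hβ' => hsep _ (hfC β) _ (hfC β') (hβ₀ β β' hβ hβ')⟩
  obtain ⟨s, z, hsz, hz⟩ :=
    hcauchy.exists_tendstoInMeasure fun β => (hsub (hfC β)).1.aestronglyMeasurable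
  have hfst : Tendsto (Prod.fst : A × ℕ → A) atTop atTop :=
    tendsto_atTop_atTop_of_monotone (fun _ _ h => h.1) fun α => ⟨(α, 0), le_rfl⟩
  exact ⟨A × ℕ, inferInstance, inferInstance, inferInstance, f, z,
    subnetOfConvexCombinations_of_mem_tailHull hfT hfst, hz, hcl _ z (fun k => hfC (s k)) hsz⟩
end
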